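/- Let F(t) = exp(t)/(1+exp(t)) and K₂ > 0. Let Z₁, Z₂ be real random variables with E[(F(Z₁) - F(Z₂))²] < (F(4K₂) - F(2K₂))²/4 and P(|Z₂| ≤ 2K₂) ≥ 3/4. Then P(|Z₁| ≤ 4K₂) ≥ 1/2. -/

import Mathlib

/-!
If `|Z₁| > 4K₂` while `|Z₂| ≤ 2K₂`, monotonicity and the symmetry `σ(-x) = 1 - σ x` of the
logistic function `σ` force `|σ Z₁ - σ Z₂| ≥ σ(4K₂) - σ(2K₂) =: c`. By Markov's inequality this
happens with probability less than `1/4`, so `P(|Z₁| ≤ 4K₂) ≥ P(|Z₂| ≤ 2K₂) - 1/4 ≥ 1/2`.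
-/

open MeasureTheory Real

lemma Real.exp_div_one_add_exp (t : ℝ) : exp t / (1 + exp t) = sigmoid t := by
  rw [sigmoid_def, exp_neg]
  field_simp
  ring

lemma Real.sigmoid_sub_sigmoid_le_abs_sub {a b x y : ℝ} (hx : b < |x|) (hy : |y| ≤ a) :
    sigmoid b - sigmoid a ≤ |sigmoid x - sigmoid y| := by
  rw [abs_le] at hy
  rcases lt_abs.1 hx with hbx | hbx
  · calc sigmoid b - sigmoid a ≤ sigmoid x - sigmoid y :=
          sub_le_sub (sigmoid_le hbx.le) (sigmoid_le hy.2)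
      _ ≤ |sigmoid x - sigmoid y| := le_abs_self _
  · calc sigmoid b - sigmoid a = sigmoid (-a) - sigmoid (-b) := by
          rw [sigmoid_neg, sigmoid_neg]; ring
      _ ≤ sigmoid y - sigmoid x := sub_le_sub (sigmoid_le hy.1) (sigmoid_le (by linarith))
      _ ≤ |sigmoid x - sigmoid y| := (le_abs_self _).trans_eq (abs_sub_comm _ _)

lemma Real.sq_sigmoid_sub_le_one (x y : ℝ) : (sigmoid x - sigmoid y) ^ 2 ≤ 1 :=
  (sq_le_one_iff_abs_le_one _).2 <| abs_sub_le_of_nonneg_of_le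
    (sigmoid_nonneg x) (sigmoid_le_one x) (sigmoid_nonneg y) (sigmoid_le_one y)

section Probability

variable {Ω : Type*} [MeasurableSpace Ω] {μ : Measure Ω}

lemma measureReal_le_lt_of_integral_lt_mul {f : Ω → ℝ} (hf_nonneg : 0 ≤ᵐ[μ] f)
    (hf_int : Integrable f μ) {c ε : ℝ} (hc : 0 < c) (h : ∫ ω, f ω ∂μ < c * ε) :
    μ.real {ω | c ≤ f ω} < ε :=
  lt_of_mul_lt_mul_left ((mul_meas_ge_le_integral_of_nonneg hf_nonneg hf_int c).trans_lt h) hc.le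

lemma integrable_sq_sigmoid_sub [IsFiniteMeasure μ] {X Y : Ω → ℝ} (hX : Measurable X)
    (hY : Measurable Y) : Integrable (fun ω ↦ (sigmoid (X ω) - sigmoid (Y ω)) ^ 2) μ := by
  refine Integrable.of_bound ?_ 1 (.of_forall fun ω ↦ ?_)
  · exact ((continuous_sigmoid.measurable.comp hX).sub
      (continuous_sigmoid.measurable.comp hY)).pow_const 2 |>.aestronglyMeasurable
  · rw [Real.norm_of_nonneg (sq_nonneg _)]
    exact sq_sigmoid_sub_le_one _ _

end Probability

/-- If the expected squared logistic discrepancy is small and Z₂ is concentrated,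
then Z₁ is concentrated too. -/
theorem Z1_concentration
    {Ω : Type*} [MeasurableSpace Ω] (μ : Measure Ω) [IsProbabilityMeasure μ]
    (F : ℝ → ℝ) (hF : ∀ t, F t = Real.exp t / (1 + Real.exp t))
    (K₂ : ℝ) (hK₂ : 0 < K₂)
    (Z₁ Z₂ : Ω → ℝ) (hZ₁ : Measurable Z₁) (hZ₂ : Measurable Z₂)
    (hexp : ∫ ω, (F (Z₁ ω) - F (Z₂ ω)) ^ 2 ∂μ < (F (4 * K₂) - F (2 * K₂)) ^ 2 / 4)
    (hZ₂conc : ENNReal.ofReal (3/4) ≤ μ {ω | |Z₂ ω| ≤ 2 * K₂}) :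
    ENNReal.ofReal (1/2) ≤ μ {ω | |Z₁ ω| ≤ 4 * K₂} := by
  obtain rfl : F = sigmoid := funext fun t ↦ (hF t).trans (exp_div_one_add_exp t)
  set c := sigmoid (4 * K₂) - sigmoid (2 * K₂)
  have hc : 0 < c := sub_pos.2 (sigmoid_lt (by linarith))
  set T := {ω | c ^ 2 ≤ (sigmoid (Z₁ ω) - sigmoid (Z₂ ω)) ^ 2}
  have hT : μ.real T < 1 / 4 :=
    measureReal_le_lt_of_integral_lt_mul (.of_forall fun _ ↦ sq_nonneg _)
      (integrable_sq_sigmoid_sub hZ₁ hZ₂) (pow_pos hc 2) (hexp.trans_eq (by ring))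
  have hsub : {ω | |Z₂ ω| ≤ 2 * K₂} \ T ⊆ {ω | |Z₁ ω| ≤ 4 * K₂} := by
    rintro ω ⟨hZ₂ω, hω⟩
    by_contra hZ₁ω
    exact hω <| (pow_le_pow_left₀ hc.le
      (sigmoid_sub_sigmoid_le_abs_sub (not_le.1 hZ₁ω) hZ₂ω) 2).trans_eq (sq_abs _)
  rw [ENNReal.ofReal_le_iff_le_toReal (measure_ne_top _ _)] at hZ₂conc ⊢
  have hdiff := (le_measureReal_sdiff (μ := μ)).trans (measureReal_mono hsub)
  simp only [measureReal_def] at hdiff hT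
  linarith
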